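/- (q-Vandermonde identity for words.) For all words x, y, u ∈ A*: binom_q(xy, u) = Σ q^{|u_1|·(|y|−|u_2|)}·binom_q(x,u_1)·binom_q(y,u_2), where the sum ranges over all factorizations u = u_1 u_2 with u_1, u_2 ∈ A* and |u_2| ≤ |y| (the terms with |u_2| > |y| vanish since then binom_q(y,u_2) = 0). -/

import Mathlib

noncomputable def qbinAux {A : Type*} [DecidableEq A] : List A → List A → Polynomial ℕ
  | _, [] => 1
  | [], _ :: _ => 0
  | a :: u, b :: v =>
      Polynomial.X ^ (v.length + 1) * qbinAux u (b :: v) +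
        (if a = b then qbinAux u v else 0)

/-- The `q`-binomial coefficient `binom_q(u,v)` of two words. -/
noncomputable def qbin {A : Type*} [DecidableEq A] (u v : List A) : Polynomial ℕ :=
  qbinAux u.reverse v.reverse

/-! The proof is by induction on `y`, peeling off its last letter `a` together with the last
letter `b` of `u = v b`. The defining recursion gives
`binom_q(xya, vb) = q^{|v|+1} binom_q(xy, vb) + δ_{a,b} binom_q(xy, v)`, and the same recursion
applied to `binom_q(ya, u₂b)` splits each summand with cut point `j ≤ |v|` into the matching
summands of the two expansions on the right; the summand with `u₁ = vb` only picks up the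
factor `q^{|v|+1}`. Summands with `|u₂| > |y|` vanish, which accounts for the restriction
`|u₂| ≤ |y|`. -/

open Finset Polynomial

section

variable {A : Type*} [DecidableEq A]

lemma qbinAux_nil_right (u : List A) : qbinAux u [] = 1 := by
  cases u <;> rfl

lemma qbinAux_eq_zero_of_length_lt : ∀ {u v : List A}, u.length < v.length → qbinAux u v = 0
  | [], _ :: _, _ => rfl
  | _ :: u, b :: v, h => by
    simp only [List.length_cons] at h
    rw [qbinAux, qbinAux_eq_zero_of_length_lt (u := u) (v := b :: v) (by simp; omega),
      qbinAux_eq_zero_of_length_lt (u := u) (v := v) (by omega)]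
    simp

@[simp]
lemma qbin_nil_right (u : List A) : qbin u [] = 1 :=
  qbinAux_nil_right _

lemma qbin_eq_zero_of_length_lt {u v : List A} (h : u.length < v.length) : qbin u v = 0 :=
  qbinAux_eq_zero_of_length_lt (by simpa using h)

lemma qbin_append_singleton (u v : List A) (a b : A) :
    qbin (u ++ [a]) (v ++ [b]) =
      X ^ (v.length + 1) * qbin u (v ++ [b]) + if a = b then qbin u v else 0 := by
  simp [qbin, qbinAux]

noncomputable def vandermondeTerm (x y u : List A) (j : ℕ) : ℕ[X] :=
  X ^ (j * (y.length - (u.length - j))) * qbin x (u.take j) * qbin y (u.drop j)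

lemma vandermondeTerm_eq_zero_of_length_lt {x y u : List A} {j : ℕ}
    (h : y.length < u.length - j) : vandermondeTerm x y u j = 0 := by
  rw [vandermondeTerm, qbin_eq_zero_of_length_lt (u := y) (by simpa using h), mul_zero]

lemma vandermondeTerm_append_singleton_of_le (x y v : List A) (a b : A) {j : ℕ}
    (hj : j ≤ v.length) :
    vandermondeTerm x (y ++ [a]) (v ++ [b]) j =
      X ^ (v.length + 1) * vandermondeTerm x y (v ++ [b]) j +
        if a = b then vandermondeTerm x y v j else 0 := by
  simp only [vandermondeTerm, List.length_append, List.length_singleton,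
    List.take_append_of_le_length hj, List.drop_append_of_le_length hj,
    qbin_append_singleton, List.length_drop, mul_add, mul_ite, mul_zero]
  rw [show y.length + 1 - (v.length + 1 - j) = y.length - (v.length - j) by omega]
  congr 1
  rcases lt_or_ge y.length (v.length - j + 1) with hy | hy
  · rw [qbin_eq_zero_of_length_lt (u := y) (v := v.drop j ++ [b]) (by simpa using hy)]
    ring
  · -- `q^j` from the shorter `u₂` and `q^{|u₂|+1}` from the recursion make up `q^{|v|+1}`
    rw [show y.length - (v.length - j) = y.length - (v.length + 1 - j) + 1 by omega,
      show v.length + 1 = j + (v.length - j + 1) by omega]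
    ring

lemma vandermondeTerm_append_singleton_length (x y u : List A) (a : A) :
    vandermondeTerm x (y ++ [a]) u u.length = X ^ u.length * vandermondeTerm x y u u.length := by
  simp only [vandermondeTerm, List.length_append, List.length_singleton, Nat.sub_self,
    Nat.sub_zero, List.drop_length, qbin_nil_right]
  ring

lemma qbin_append_eq_sum (x y u : List A) :
    qbin (x ++ y) u = ∑ j ∈ range (u.length + 1), vandermondeTerm x y u j := by
  induction y using List.reverseRecOn generalizing u with
  | nil =>
    rw [sum_range_succ, sum_eq_zero fun j hj ↦
      vandermondeTerm_eq_zero_of_length_lt (by simp at hj ⊢; omega)]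
    simp [vandermondeTerm]
  | append_singleton y a ih =>
    obtain rfl | ⟨v, b, rfl⟩ := u.eq_nil_or_concat'
    · simp [vandermondeTerm]
    rw [← List.append_assoc, qbin_append_singleton, ih, ih, sum_range_succ _ (v ++ [b]).length,
      sum_range_succ _ (v ++ [b]).length, vandermondeTerm_append_singleton_length,
      List.length_append, List.length_singleton,
      sum_congr rfl fun j hj ↦ vandermondeTerm_append_singleton_of_le x y v a b
        (Nat.lt_succ_iff.mp (mem_range.mp hj)),
      sum_add_distrib, ← mul_sum, sum_ite_irrel, sum_const_zero]
    ring

end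

theorem qbin_vandermonde_general (A : Type*) [DecidableEq A] (x y u : List A) :
    qbin (x ++ y) u =
      ∑ j ∈ (Finset.range (u.length + 1)).filter (fun j => u.length - j ≤ y.length),
        Polynomial.X ^ (j * (y.length - (u.length - j))) *
          qbin x (u.take j) * qbin y (u.drop j) := by
  rw [qbin_append_eq_sum, sum_filter_of_ne fun j _ hj ↦ ?_]
  · rfl
  by_contra hlt
  exact hj (vandermondeTerm_eq_zero_of_length_lt (not_le.mp hlt))

/-- The `q`-Vandermonde identity for words:
`binom_q(xy,u) = Σ_{u = u₁u₂, |u₂| ≤ |y|} q^{|u₁|(|y|-|u₂|)} binom_q(x,u₁) binom_q(y,u₂)`.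
Factorizations `u = u₁u₂` are indexed by the length `j` of `u₁`. -/
theorem qbin_vandermonde (A : Type*) [Fintype A] [DecidableEq A] (x y u : List A) :
    qbin (x ++ y) u =
      ∑ j ∈ (Finset.range (u.length + 1)).filter (fun j => u.length - j ≤ y.length),
        Polynomial.X ^ (j * (y.length - (u.length - j))) *
          qbin x (u.take j) * qbin y (u.drop j) :=
  qbin_vandermonde_general A x y u
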